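/- arXiv:1511.03788 — 4 statements merged into one kernel-verified Lean document; each statement's English description precedes it below -/
import Mathlib

section
/- An n-poised set of nodes contains at most n+1 collinear nodes. -/
open MvPolynomial

noncomputable section
open scoped Classical

/-- Bivariate real polynomials. -/
abbrev Poly2 := MvPolynomial (Fin 2) ℝ

/-- Evaluation of a bivariate polynomial at a point of the plane. -/
def evalPt (A : Fin 2 → ℝ) (p : Poly2) : ℝ := MvPolynomial.eval A p

/-- A line is (identified with) a polynomial of total degree 1. -/
def IsLine (ℓ : Poly2) : Prop := ℓ.totalDegree = 1

/-- `X` is `n`-poised: unique interpolation from Π_n at the nodes of `X`. -/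
def Poised (n : ℕ) (X : Finset (Fin 2 → ℝ)) : Prop :=
  ∀ c : (Fin 2 → ℝ) → ℝ,
    ∃! p : Poly2, p.totalDegree ≤ n ∧ ∀ A ∈ X, evalPt A p = c A

/-- `p` is an `n`-fundamental polynomial of the node `A` of `X`. -/
def IsFund (n : ℕ) (X : Finset (Fin 2 → ℝ)) (A : Fin 2 → ℝ) (p : Poly2) : Prop :=
  p.totalDegree ≤ n ∧ evalPt A p = 1 ∧ ∀ B ∈ X, B ≠ A → evalPt B p = 0

/-- A `GC_n`-set: an `n`-poised set all of whose nodes have fundamental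
polynomials that are products of `n` linear factors. -/
def GCSet (n : ℕ) (X : Finset (Fin 2 → ℝ)) : Prop :=
  Poised n X ∧
    ∀ A ∈ X, ∃ f : Fin n → Poly2, (∀ i, IsLine (f i)) ∧ IsFund n X A (∏ i, f i)

/-- The node `A` uses the line `ℓ`: `ℓ` divides a fundamental polynomial of `A`. -/
def Uses (n : ℕ) (X : Finset (Fin 2 → ℝ)) (A : Fin 2 → ℝ) (ℓ : Poly2) : Prop :=
  ∃ p, IsFund n X A p ∧ ℓ ∣ p

/-- The nodes of `X` lying on the line `ℓ`. -/
def nodesOn (X : Finset (Fin 2 → ℝ)) (ℓ : Poly2) : Finset (Fin 2 → ℝ) :=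
  X.filter (fun A => evalPt A ℓ = 0)

/-- `X` contains no 5 collinear nodes. -/
def NoFiveCollinear (X : Finset (Fin 2 → ℝ)) : Prop :=
  ∀ ℓ : Poly2, IsLine ℓ → (nodesOn X ℓ).card ≤ 4
/-! Restricted to a line, a polynomial of degree at most `n` becomes a univariate polynomial of
degree at most `n`. Apply this to the fundamental polynomial of one node `A` on the line: it
vanishes at every other node on the line but not at `A`, so there are at most `n` other nodes. -/

namespace MvPolynomial

variable {σ R : Type*} [CommSemiring R]

theorem natDegree_aeval_le_totalDegree {f : σ → Polynomial R}
    (hf : ∀ i, (f i).natDegree ≤ 1) (p : MvPolynomial σ R) :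
    (aeval f p).natDegree ≤ p.totalDegree := by
  rw [aeval_def, eval₂_eq]
  refine Polynomial.natDegree_sum_le_of_forall_le _ _ fun m hm => ?_
  calc (algebraMap R (Polynomial R) (coeff m p) * ∏ i ∈ m.support, f i ^ m i).natDegree
      ≤ ∑ i ∈ m.support, (f i ^ m i).natDegree :=
        (Polynomial.natDegree_C_mul_le _ _).trans (Polynomial.natDegree_prod_le _ _)
    _ ≤ ∑ i ∈ m.support, m i :=
        Finset.sum_le_sum fun i _ =>
          Polynomial.natDegree_pow_le.trans (mul_le_of_le_one_right' (hf i))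
    _ ≤ p.totalDegree := le_totalDegree hm

def restrictLine (P v : σ → R) (p : MvPolynomial σ R) : Polynomial R :=
  aeval (fun i => Polynomial.C (v i) * Polynomial.X + Polynomial.C (P i)) p

theorem eval_restrictLine (P v : σ → R) (p : MvPolynomial σ R) (t : R) :
    (restrictLine P v p).eval t = eval (P + t • v) p := by
  rw [restrictLine, ← Polynomial.coe_aeval_eq_eval, comp_aeval_apply, ← aeval_eq_eval]
  congr 2
  funext i
  simp only [Polynomial.coe_aeval_eq_eval, Polynomial.eval_add, Polynomial.eval_mul,
    Polynomial.eval_C, Polynomial.eval_X, Pi.add_apply, Pi.smul_apply, smul_eq_mul]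
  ring

theorem natDegree_restrictLine_le (P v : σ → R) (p : MvPolynomial σ R) :
    (restrictLine P v p).natDegree ≤ p.totalDegree :=
  natDegree_aeval_le_totalDegree (fun _ => Polynomial.natDegree_linear_le) p

theorem exists_eq_C_add_sum_smul_X [Fintype σ] {p : MvPolynomial σ R}
    (hp : p.totalDegree ≤ 1) : ∃ (c : R) (a : σ → R), p = C c + ∑ i, a i • X i := by
  have hlin : homogeneousComponent 1 p ∈ Submodule.span R (Set.range X) :=
    homogeneousSubmodule_one_eq_span_X (σ := σ) (R := R) ▸ homogeneousComponent_mem 1 p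
  obtain ⟨a, ha⟩ := (Submodule.mem_span_range_iff_exists_fun R).1 hlin
  refine ⟨coeff 0 p, a, ?_⟩
  calc p = ∑ i ∈ Finset.range (p.totalDegree + 1), homogeneousComponent i p :=
        (sum_homogeneousComponent p).symm
    _ = ∑ i ∈ Finset.range 2, homogeneousComponent i p :=
        Finset.sum_subset (Finset.range_subset_range.2 (by omega)) fun i _ hi =>
          homogeneousComponent_eq_zero i p (by simpa using hi)
    _ = C (coeff 0 p) + ∑ i, a i • X i := by
        rw [Finset.sum_range_succ, Finset.sum_range_one, homogeneousComponent_zero, ha]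

end MvPolynomial

theorem IsLine.exists_eq_add_smul {ℓ : Poly2} (hℓ : IsLine ℓ) {P : Fin 2 → ℝ}
    (hP : evalPt P ℓ = 0) :
    ∃ v : Fin 2 → ℝ, ∀ B, evalPt B ℓ = 0 → ∃ t : ℝ, P + t • v = B := by
  obtain ⟨c, a, rfl⟩ := exists_eq_C_add_sum_smul_X hℓ.le
  have ha : a 0 ^ 2 + a 1 ^ 2 ≠ 0 := by
    intro h
    obtain ⟨h0, h1⟩ := (add_eq_zero_iff_of_nonneg (sq_nonneg _) (sq_nonneg _)).1 h
    have hzero : a = 0 :=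
      funext <| Fin.forall_fin_two.2 ⟨eq_zero_of_pow_eq_zero h0, eq_zero_of_pow_eq_zero h1⟩
    simp [IsLine, hzero] at hℓ
  have heval : ∀ x, evalPt x (C c + ∑ i, a i • X i) = c + a 0 * x 0 + a 1 * x 1 := by
    intro x
    simp [evalPt, Fin.sum_univ_two, add_assoc]
  -- `v` is orthogonal to the normal `a`, and `t` is the coordinate of `B - P` along `v`
  refine ⟨![-a 1, a 0], fun B hB => ⟨(a 0 * (B 1 - P 1) - a 1 * (B 0 - P 0)) /
    (a 0 ^ 2 + a 1 ^ 2), ?_⟩⟩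
  rw [heval] at hP hB
  funext i
  fin_cases i
  · simp only [Fin.isValue, Matrix.smul_cons, smul_eq_mul, mul_neg, Matrix.smul_empty,
      Fin.zero_eta, Pi.add_apply, Matrix.cons_val_zero]
    field_simp
    linear_combination (-a 0) * (hB - hP)
  · simp only [Fin.isValue, Matrix.smul_cons, smul_eq_mul, mul_neg, Matrix.smul_empty,
      Fin.mk_one, Pi.add_apply, Matrix.cons_val_one, Matrix.cons_val_fin_one]
    field_simp
    linear_combination (-a 1) * (hB - hP)

namespace Poised

variable {n : ℕ} {X : Finset (Fin 2 → ℝ)}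

theorem exists_isFund (hX : Poised n X) {A : Fin 2 → ℝ} (hA : A ∈ X) :
    ∃ p, IsFund n X A p := by
  obtain ⟨p, ⟨hdeg, hp⟩, -⟩ := hX fun B => if B = A then 1 else 0
  exact ⟨p, hdeg, by simpa using hp A hA, fun B hB hBA => by simpa [hBA] using hp B hB⟩

theorem card_le_of_subset_affineLine (hX : Poised n X) {S : Finset (Fin 2 → ℝ)} (hSX : S ⊆ X)
    (P v : Fin 2 → ℝ) (hS : ∀ B ∈ S, ∃ t : ℝ, P + t • v = B) : S.card ≤ n + 1 := by
  by_contra! hcard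
  obtain ⟨A, hA⟩ : S.Nonempty := Finset.card_pos.1 (by omega)
  obtain ⟨p, hdeg, hpA, hpB⟩ := hX.exists_isFund (hSX hA)
  choose t ht using hS
  let q := restrictLine P v p
  have hq : ∀ B (hB : B ∈ S), q.eval (t B hB) = evalPt B p := fun B hB => by
    rw [eval_restrictLine, ht B hB, evalPt]
  have hq0 : q = 0 := by
    refine Polynomial.eq_zero_of_natDegree_lt_card_of_eval_eq_zero q
      (f := fun B : S.erase A => t B (Finset.mem_of_mem_erase B.2)) ?_ ?_ ?_
    · rintro ⟨B, hB⟩ ⟨B', hB'⟩ h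
      rw [Subtype.mk.injEq, ← ht B (Finset.mem_of_mem_erase hB),
        ← ht B' (Finset.mem_of_mem_erase hB')]
      exact congrArg (P + · • v) h
    · rintro ⟨B, hB⟩
      rw [hq]
      exact hpB B (hSX (Finset.mem_of_mem_erase hB)) (Finset.ne_of_mem_erase hB)
    · rw [Fintype.card_coe, Finset.card_erase_of_mem hA]
      exact (natDegree_restrictLine_le P v p).trans_lt (by omega)
  simpa [hq0, hpA] using hq A hA

end Poised

/-- An `n`-poised set contains at most `n+1` collinear nodes. -/
theorem stmt2 (n : ℕ) (X : Finset (Fin 2 → ℝ)) (hX : Poised n X)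
    (ℓ : Poly2) (hℓ : IsLine ℓ) :
    (nodesOn X ℓ).card ≤ n + 1 := by
  rcases (nodesOn X ℓ).eq_empty_or_nonempty with hempty | ⟨P, hP⟩
  · simp [hempty]
  obtain ⟨v, hv⟩ := hℓ.exists_eq_add_smul (Finset.mem_filter.1 hP).2
  exact hX.card_le_of_subset_affineLine (Finset.filter_subset _ _) P v
    fun B hB => hv B (Finset.mem_filter.1 hB).2
end
end

section
/- Let X be a GC₄-set of 15 nodes with no 5 collinear nodes. If a line ℓ passes through exactly 2 or exactly 3 nodes of X, then at most one node of X uses ℓ (i.e., ℓ divides the fundamental polynomial of at most one node). -/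
/-!
Let `p_A = ∏ fᵢ` and `p_B = ∏ gⱼ` be the fundamental polynomials of `A ≠ B`, products of four
lines. Lines are prime, so if both nodes use `ℓ` then some `f_{i_A}` and `g_{i_B}` vanish exactly
on `ℓ`, and `A`, `B` lie off `ℓ`. At least `15 - 3 - 2 = 10` nodes lie off `ℓ` and differ from
`A`, `B`; each of them lies on one of the three other lines of each product. Pigeonhole over the
`3 · 3` index pairs gives a pair `fᵢ`, `gⱼ` through two common nodes, hence the same line.
Discarding the at most four nodes on it and repeating (`6 > 2 · 2`, `2 > 1 · 1`) matches every
`gⱼ` with some `fᵢ`. As no `fᵢ` vanishes at `A`, neither does `p_B`, although `p_B(A) = 0`.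
-/

open MvPolynomial

noncomputable section
open scoped Classical

lemma eq_C_add_C_mul_X_add_C_mul_X_of_totalDegree_le_one {f : Poly2} (hf : f.totalDegree ≤ 1) :
    f = C (coeff 0 f) + C (coeff (Finsupp.single 0 1) f) * X 0
      + C (coeff (Finsupp.single 1 1) f) * X 1 := by
  ext m
  obtain ⟨a, b, rfl⟩ : ∃ a b, m = Finsupp.single 0 a + Finsupp.single 1 b :=
    ⟨m 0, m 1, by ext i; fin_cases i <;> simp⟩
  simp only [coeff_add, coeff_C, coeff_C_mul, coeff_X, Finsupp.ext_iff, Fin.forall_fin_two]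
  by_cases h2 : 2 ≤ a + b
  · rw [coeff_eq_zero_of_totalDegree_lt, if_neg (by simp; omega), if_neg (by simp; omega),
      if_neg (by simp; omega)]
    · simp
    · rw [← Finsupp.degree_apply, Finsupp.degree_eq_sum]
      simp
      omega
  · obtain ⟨rfl, rfl⟩ | ⟨rfl, rfl⟩ | ⟨rfl, rfl⟩ :
        (a = 0 ∧ b = 0) ∨ (a = 1 ∧ b = 0) ∨ (a = 0 ∧ b = 1) := by omega
    all_goals simp

lemma evalPt_prod {ι : Type*} (s : Finset ι) (f : ι → Poly2) (P : Fin 2 → ℝ) :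
    evalPt P (∏ i ∈ s, f i) = ∏ i ∈ s, evalPt P (f i) :=
  map_prod (eval P) f s

namespace IsLine

variable {ℓ f g : Poly2}

lemma ne_zero (hℓ : IsLine ℓ) : ℓ ≠ 0 := by
  rintro rfl
  simp [IsLine] at hℓ

lemma exists_eq (hf : IsLine f) :
    ∃ a b c : ℝ, f = C a + C b * X 0 + C c * X 1 ∧ (b ≠ 0 ∨ c ≠ 0) := by
  obtain ⟨a, b, c, rfl⟩ : ∃ a b c : ℝ, f = C a + C b * X 0 + C c * X 1 :=
    ⟨_, _, _, eq_C_add_C_mul_X_add_C_mul_X_of_totalDegree_le_one hf.le⟩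
  refine ⟨a, b, c, rfl, ?_⟩
  by_contra! h
  simp [IsLine, h.1, h.2] at hf

lemma evalPt_eq_zero_iff (hf : IsLine f) {P Q : Fin 2 → ℝ} (hPQ : P ≠ Q)
    (hP : evalPt P f = 0) (hQ : evalPt Q f = 0) (R : Fin 2 → ℝ) :
    evalPt R f = 0 ↔ (R 0 - P 0) * (Q 1 - P 1) = (R 1 - P 1) * (Q 0 - P 0) := by
  obtain ⟨a, b, c, rfl, hbc⟩ := hf.exists_eq
  simp only [evalPt, eval_add, eval_mul, eval_C, eval_X] at hP hQ ⊢
  constructor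
  · intro hR
    rcases hbc with hb | hc
    · refine mul_left_cancel₀ hb ?_
      linear_combination (Q 1 - P 1) * (hR - hP) - (R 1 - P 1) * (hQ - hP)
    · refine mul_left_cancel₀ hc ?_
      linear_combination (R 0 - P 0) * (hQ - hP) - (Q 0 - P 0) * (hR - hP)
  · intro h
    have hu : Q 0 - P 0 ≠ 0 ∨ Q 1 - P 1 ≠ 0 := by
      by_contra! hu
      exact hPQ (funext (Fin.forall_fin_two.2 ⟨by linarith [hu.1], by linarith [hu.2]⟩))
    rcases hu with hu | hu
    · refine (mul_eq_zero.1 ?_).resolve_left hu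
      linear_combination (R 0 - P 0) * (hQ - hP) - c * h + (Q 0 - P 0) * hP
    · refine (mul_eq_zero.1 ?_).resolve_left hu
      linear_combination (R 1 - P 1) * (hQ - hP) + b * h + (Q 1 - P 1) * hP

lemma evalPt_eq_zero_iff_of_common_zeros (hf : IsLine f) (hg : IsLine g) {P Q : Fin 2 → ℝ}
    (hPQ : P ≠ Q) (hfP : evalPt P f = 0) (hfQ : evalPt Q f = 0) (hgP : evalPt P g = 0)
    (hgQ : evalPt Q g = 0) (R : Fin 2 → ℝ) :
    evalPt R g = 0 ↔ evalPt R f = 0 := by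
  rw [hf.evalPt_eq_zero_iff hPQ hfP hfQ, hg.evalPt_eq_zero_iff hPQ hgP hgQ]

lemma prime (hℓ : IsLine ℓ) : Prime ℓ := by
  refine (irreducible_of_totalDegree_eq_one hℓ fun x hx => ?_).prime
  obtain ⟨m, hm⟩ := ne_zero_iff.1 hℓ.ne_zero
  exact isUnit_iff_ne_zero.2 fun hx0 => hm (zero_dvd_iff.1 (hx0 ▸ hx m))

lemma evalPt_eq_zero_iff_of_dvd (hℓ : IsLine ℓ) (hf : IsLine f) (h : ℓ ∣ f) (R : Fin 2 → ℝ) :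
    evalPt R f = 0 ↔ evalPt R ℓ = 0 := by
  obtain ⟨t, rfl⟩ := h
  have ht : t ≠ 0 := by
    rintro rfl
    exact hf.ne_zero (mul_zero ℓ)
  have hdeg : t.totalDegree = 0 := by
    have := totalDegree_mul_of_isDomain hℓ.ne_zero ht
    rw [hf, hℓ] at this
    omega
  obtain ⟨r, rfl⟩ : ∃ r, t = C r := ⟨_, totalDegree_eq_zero_iff_eq_C.1 hdeg⟩
  have hr : r ≠ 0 := by
    rintro rfl
    exact ht C_0
  simp [evalPt, hr]

end IsLine

lemma NoFiveCollinear.mono {X Z : Finset (Fin 2 → ℝ)} (hX : NoFiveCollinear X) (hZX : Z ⊆ X) :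
    NoFiveCollinear Z := fun ℓ hℓ =>
  (Finset.card_le_card (Finset.filter_subset_filter _ hZX)).trans (hX ℓ hℓ)

lemma Poised.isFund_unique {n : ℕ} {X : Finset (Fin 2 → ℝ)} {A : Fin 2 → ℝ} {p q : Poly2}
    (hX : Poised n X) (hp : IsFund n X A p) (hq : IsFund n X A q) : p = q := by
  have key : ∀ s, IsFund n X A s →
      s.totalDegree ≤ n ∧ ∀ B ∈ X, evalPt B s = if B = A then 1 else 0 := by
    rintro s ⟨hdeg, hA, hB⟩
    refine ⟨hdeg, fun B hBX => ?_⟩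
    split_ifs with hBA
    · exact hBA ▸ hA
    · exact hB B hBX hBA
  exact (hX _).unique (key p hp) (key q hq)

namespace IsFund

variable {ι : Type*} [Fintype ι] {n : ℕ} {X : Finset (Fin 2 → ℝ)} {A P : Fin 2 → ℝ}
  {f : ι → Poly2}

lemma evalPt_factor_ne_zero (h : IsFund n X A (∏ i, f i)) (i : ι) : evalPt A (f i) ≠ 0 := by
  intro hi
  have hA := h.2.1
  rw [evalPt_prod, Finset.prod_eq_zero (Finset.mem_univ i) hi] at hA
  exact zero_ne_one hA

lemma exists_factor_evalPt_eq_zero (h : IsFund n X A (∏ i, f i)) (hP : P ∈ X) (hPA : P ≠ A) :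
    ∃ i, evalPt P (f i) = 0 := by
  have hP0 := h.2.2 P hP hPA
  rw [evalPt_prod, Finset.prod_eq_zero_iff] at hP0
  simpa using hP0

lemma exists_factor_mem_erase_evalPt_eq_zero [DecidableEq ι] (h : IsFund n X A (∏ i, f i))
    (hP : P ∈ X) (hPA : P ≠ A) {i₀ : ι} (hi₀ : evalPt P (f i₀) ≠ 0) :
    ∃ i ∈ Finset.univ.erase i₀, evalPt P (f i) = 0 := by
  obtain ⟨i, hi⟩ := h.exists_factor_evalPt_eq_zero hP hPA
  exact ⟨i, Finset.mem_erase.2 ⟨by rintro rfl; exact hi₀ hi, Finset.mem_univ i⟩, hi⟩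

lemma evalPt_prod_ne_zero_of_forall_exists {κ : Type*} [Fintype κ] {g : κ → Poly2}
    (h : IsFund n X A (∏ i, f i))
    (hgf : ∀ j, ∃ i, ∀ R, evalPt R (g j) = 0 ↔ evalPt R (f i) = 0) :
    evalPt A (∏ j, g j) ≠ 0 := by
  rw [evalPt_prod]
  refine Finset.prod_ne_zero_iff.2 fun j _ => ?_
  obtain ⟨i, hi⟩ := hgf j
  rw [Ne, hi]
  exact h.evalPt_factor_ne_zero i

end IsFund

lemma Uses.exists_factor_evalPt_eq_zero_iff {ι : Type*} [Fintype ι] {n : ℕ}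
    {X : Finset (Fin 2 → ℝ)} {A : Fin 2 → ℝ} {f : ι → Poly2} {ℓ : Poly2}
    (hU : Uses n X A ℓ) (hX : Poised n X) (hf : ∀ i, IsLine (f i))
    (hA : IsFund n X A (∏ i, f i)) (hℓ : IsLine ℓ) :
    ∃ i, ∀ R, evalPt R (f i) = 0 ↔ evalPt R ℓ = 0 := by
  obtain ⟨p, hp, hℓp⟩ := hU
  rw [hX.isFund_unique hp hA] at hℓp
  obtain ⟨i, -, hi⟩ := hℓ.prime.exists_mem_finset_dvd hℓp
  exact ⟨i, hℓ.evalPt_eq_zero_iff_of_dvd (hf i) hi⟩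

lemma mem_sdiff_nodesOn {X : Finset (Fin 2 → ℝ)} {ℓ : Poly2} {P : Fin 2 → ℝ} :
    P ∈ X \ nodesOn X ℓ ↔ P ∈ X ∧ evalPt P ℓ ≠ 0 := by
  simp +contextual [nodesOn]

section Matching

variable {ι κ : Type*} {Z : Finset (Fin 2 → ℝ)} {F : ι → Poly2} {G : κ → Poly2}

lemma exists_evalPt_eq_zero_iff_of_card_mul_lt (hF : ∀ i, IsLine (F i))
    (hG : ∀ j, IsLine (G j)) {S : Finset ι} {T : Finset κ}
    (hFZ : ∀ P ∈ Z, ∃ i ∈ S, evalPt P (F i) = 0) (hGZ : ∀ P ∈ Z, ∃ j ∈ T, evalPt P (G j) = 0)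
    (hcard : S.card * T.card < Z.card) :
    ∃ i ∈ S, ∃ j ∈ T, ∀ R, evalPt R (G j) = 0 ↔ evalPt R (F i) = 0 := by
  obtain ⟨P₀, hP₀⟩ : Z.Nonempty := Finset.card_pos.1 (by omega)
  obtain ⟨i₀, -⟩ := hFZ P₀ hP₀
  obtain ⟨j₀, -⟩ := hGZ P₀ hP₀
  have : Nonempty ι := ⟨i₀⟩
  have : Nonempty κ := ⟨j₀⟩
  choose! σ hσS hσ using hFZ
  choose! τ hτT hτ using hGZ
  obtain ⟨P, hP, Q, hQ, hPQ, hστ⟩ := Finset.exists_ne_map_eq_of_card_lt_of_maps_to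
    (t := S ×ˢ T) (f := fun P => (σ P, τ P)) (by rwa [Finset.card_product])
    (fun P hP => Finset.mem_product.2 ⟨hσS P hP, hτT P hP⟩)
  simp only [Prod.mk.injEq] at hστ
  exact ⟨σ P, hσS P hP, τ P, hτT P hP, (hF _).evalPt_eq_zero_iff_of_common_zeros (hG _) hPQ
    (hσ P hP) (hστ.1 ▸ hσ Q hQ) (hτ P hP) (hστ.2 ▸ hτ Q hQ)⟩

lemma forall_exists_evalPt_eq_zero_iff_of_cover [DecidableEq ι] [DecidableEq κ]
    (hZ : NoFiveCollinear Z) (hF : ∀ i, IsLine (F i)) (hG : ∀ j, IsLine (G j))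
    {k : ℕ} (hk : k ≤ 3) {S : Finset ι} {T : Finset κ} (hS : S.card = k) (hT : T.card = k)
    (hZcard : 4 * k ≤ Z.card + 2)
    (hFZ : ∀ P ∈ Z, ∃ i ∈ S, evalPt P (F i) = 0) (hGZ : ∀ P ∈ Z, ∃ j ∈ T, evalPt P (G j) = 0) :
    ∀ j ∈ T, ∃ i ∈ S, ∀ R, evalPt R (G j) = 0 ↔ evalPt R (F i) = 0 := by
  induction k generalizing Z S T with
  | zero => simp_all
  | succ k ih =>
    obtain ⟨i, hi, j, hj, hij⟩ := exists_evalPt_eq_zero_iff_of_card_mul_lt hF hG hFZ hGZ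
      (by
        rw [hS, hT]
        rcases (by omega : k = 0 ∨ k = 1 ∨ k = 2) with rfl | rfl | rfl <;> omega)
    have hZ'card : 4 * k ≤ (Z \ nodesOn Z (F i)).card + 2 := by
      have := Finset.le_card_sdiff (nodesOn Z (F i)) Z
      have := hZ (F i) (hF i)
      omega
    have hFZ' : ∀ P ∈ Z \ nodesOn Z (F i), ∃ i' ∈ S.erase i, evalPt P (F i') = 0 := by
      intro P hP
      obtain ⟨hPZ, hPi⟩ := mem_sdiff_nodesOn.1 hP
      obtain ⟨i', hi', hPi'⟩ := hFZ P hPZ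
      exact ⟨i', Finset.mem_erase.2 ⟨by rintro rfl; exact hPi hPi', hi'⟩, hPi'⟩
    have hGZ' : ∀ P ∈ Z \ nodesOn Z (F i), ∃ j' ∈ T.erase j, evalPt P (G j') = 0 := by
      intro P hP
      obtain ⟨hPZ, hPi⟩ := mem_sdiff_nodesOn.1 hP
      obtain ⟨j', hj', hPj'⟩ := hGZ P hPZ
      exact ⟨j', Finset.mem_erase.2 ⟨by rintro rfl; exact hPi ((hij P).1 hPj'), hj'⟩, hPj'⟩
    have ih' := ih (hZ.mono Finset.sdiff_subset) (by omega)
      (by rw [Finset.card_erase_of_mem hi, hS]; rfl) (by rw [Finset.card_erase_of_mem hj, hT]; rfl)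
      hZ'card hFZ' hGZ'
    intro j' hj'
    by_cases hj'j : j' = j
    · exact hj'j ▸ ⟨i, hi, hij⟩
    · obtain ⟨i', hi', h'⟩ := ih' j' (Finset.mem_erase.2 ⟨hj'j, hj'⟩)
      exact ⟨i', Finset.mem_of_mem_erase hi', h'⟩

end Matching

/-- In a `GC₄`-set of 15 nodes with no 5 collinear nodes, a 2-node or 3-node
line is used by at most one node. -/
theorem stmt5 (X : Finset (Fin 2 → ℝ)) (hGC : GCSet 4 X) (hcard : X.card = 15)
    (h5 : NoFiveCollinear X)
    (ℓ : Poly2) (hℓ : IsLine ℓ) (hk : (nodesOn X ℓ).card = 2 ∨ (nodesOn X ℓ).card = 3)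
    (A B : Fin 2 → ℝ) (hA : A ∈ X) (hB : B ∈ X)
    (hUA : Uses 4 X A ℓ) (hUB : Uses 4 X B ℓ) :
    A = B := by
  by_contra hAB
  obtain ⟨hX, hGC⟩ := hGC
  obtain ⟨F, hF, hFA⟩ := hGC A hA
  obtain ⟨G, hG, hGB⟩ := hGC B hB
  obtain ⟨iA, hiA⟩ := hUA.exists_factor_evalPt_eq_zero_iff hX hF hFA hℓ
  obtain ⟨iB, hiB⟩ := hUB.exists_factor_evalPt_eq_zero_iff hX hG hGB hℓ
  have hZcard : 4 * 3 ≤ ((X \ nodesOn X ℓ) \ {A, B}).card + 2 := by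
    have := Finset.le_card_sdiff {A, B} (X \ nodesOn X ℓ)
    have := Finset.le_card_sdiff (nodesOn X ℓ) X
    have := Finset.card_le_two (a := A) (b := B)
    omega
  set Z := (X \ nodesOn X ℓ) \ {A, B}
  have hZ : ∀ P ∈ Z, P ∈ X ∧ evalPt P ℓ ≠ 0 ∧ P ≠ A ∧ P ≠ B := by
    intro P hP
    obtain ⟨hPℓ, hPAB⟩ := Finset.mem_sdiff.1 hP
    simp only [Finset.mem_insert, Finset.mem_singleton, not_or] at hPAB
    exact ⟨(mem_sdiff_nodesOn.1 hPℓ).1, (mem_sdiff_nodesOn.1 hPℓ).2, hPAB⟩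
  have hmatch := forall_exists_evalPt_eq_zero_iff_of_cover (h5.mono fun P hP => (hZ P hP).1)
    hF hG le_rfl (S := Finset.univ.erase iA) (T := Finset.univ.erase iB) (by simp) (by simp)
    hZcard
    (fun P hP => hFA.exists_factor_mem_erase_evalPt_eq_zero (hZ P hP).1 (hZ P hP).2.2.1
      ((hiA P).not.2 (hZ P hP).2.1))
    (fun P hP => hGB.exists_factor_mem_erase_evalPt_eq_zero (hZ P hP).1 (hZ P hP).2.2.2
      ((hiB P).not.2 (hZ P hP).2.1))
  refine hFA.evalPt_prod_ne_zero_of_forall_exists (fun j => ?_) (hGB.2.2 A hA hAB)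
  by_cases hj : j = iB
  · exact ⟨iA, fun R => hj ▸ (hiB R).trans (hiA R).symm⟩
  · obtain ⟨i, -, hi⟩ := hmatch j (Finset.mem_erase.2 ⟨hj, Finset.mem_univ j⟩)
    exact ⟨i, hi⟩
end
end

section
/- Let X be a GC₄-set of 15 nodes with no 5 collinear nodes. Then any line passing through exactly 4 nodes of X is used by at most three nodes of X. -/
/-! Let `Y` be the 11 nodes off `ℓ`. Since `dim Π₃ = 10`, there is a nonzero `g` on `Y` with
`∑_{B ∈ Y} g(B) q(B) = 0` for every cubic `q`. A node `A` using `ℓ` has `p_A = ℓ q`, where `q` is a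
cubic vanishing on `Y ∖ {A}` but not at `A`, so `g(A) = 0`. On the other hand `g` has at least 8
nonzero values: if its support `W` had at most 7 points, pick `A ∈ W`; no line through `A` contains
more than 3 of the other (at most 6) points of `W`, since no 5 nodes are collinear, so these points
lie on 3 lines avoiding `A`, and that cubic forces `g(A) = 0`. Hence at most `11 - 8 = 3` nodes
use `ℓ`. -/

open MvPolynomial

noncomputable section
open scoped Classical

open Finset

lemma evalPt_mul (P : Fin 2 → ℝ) (p q : Poly2) : evalPt P (p * q) = evalPt P p * evalPt P q :=
  map_mul _ p q

/-- Twice the signed area of the triangle `ABC`. -/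
def det3 (A B C : Fin 2 → ℝ) : ℝ := (B 0 - A 0) * (C 1 - A 1) - (B 1 - A 1) * (C 0 - A 0)

lemma det3_self_right (A B : Fin 2 → ℝ) : det3 A B B = 0 := by unfold det3; ring

lemma det3_self_outer (A B : Fin 2 → ℝ) : det3 A B A = 0 := by unfold det3; ring

lemma det3_swap (A B C : Fin 2 → ℝ) : det3 A C B = -det3 A B C := by unfold det3; ring

lemma det3_rotate (A B C : Fin 2 → ℝ) : det3 B C A = det3 A B C := by unfold det3; ring

lemma det3_eq_zero_trans {A B C D : Fin 2 → ℝ} (hC : C ≠ A) (hB : det3 A B C = 0)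
    (hD : det3 A C D = 0) : det3 A B D = 0 := by
  have h0 : (C 0 - A 0) * det3 A B D = 0 := by
    unfold det3 at *; linear_combination (D 0 - A 0) * hB + (B 0 - A 0) * hD
  have h1 : (C 1 - A 1) * det3 A B D = 0 := by
    unfold det3 at *; linear_combination (D 1 - A 1) * hB + (B 1 - A 1) * hD
  by_contra h
  refine hC (funext fun i => ?_)
  fin_cases i
  · exact sub_eq_zero.mp ((mul_eq_zero.mp h0).resolve_right h)
  · exact sub_eq_zero.mp ((mul_eq_zero.mp h1).resolve_right h)

lemma exists_det3_ne_zero {A B : Fin 2 → ℝ} (h : A ≠ B) : ∃ D, det3 A B D ≠ 0 := by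
  -- `D` is `B` rotated by a right angle about `A`
  refine ⟨![A 0 - (B 1 - A 1), A 1 + (B 0 - A 0)], fun hD => h (funext fun i => ?_)⟩
  have hsq : (B 0 - A 0) ^ 2 + (B 1 - A 1) ^ 2 = 0 := by
    simp only [det3, Matrix.cons_val_zero, Matrix.cons_val_one] at hD; linear_combination hD
  fin_cases i <;> simp <;> nlinarith [sq_nonneg (B 0 - A 0), sq_nonneg (B 1 - A 1)]

def lineThrough (A B : Fin 2 → ℝ) : Poly2 :=
  C (B 0 - A 0) * (X 1 - C (A 1)) - C (B 1 - A 1) * (X 0 - C (A 0))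

lemma evalPt_lineThrough (A B P : Fin 2 → ℝ) : evalPt P (lineThrough A B) = det3 A B P := by
  simp [evalPt, lineThrough, det3]

lemma totalDegree_lineThrough_le (A B : Fin 2 → ℝ) : (lineThrough A B).totalDegree ≤ 1 := by
  rw [← mem_restrictTotalDegree]
  have hX : ∀ (i : Fin 2) (c : ℝ), X i - C c ∈ restrictTotalDegree (Fin 2) ℝ 1 := fun i c =>
    sub_mem ((mem_restrictTotalDegree _ _ _).mpr (totalDegree_X i).le)
      ((mem_restrictTotalDegree _ _ _).mpr ((totalDegree_C c).le.trans zero_le_one))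
  simp only [lineThrough, C_mul']
  exact sub_mem (Submodule.smul_mem _ _ (hX 1 _)) (Submodule.smul_mem _ _ (hX 0 _))

lemma isLine_lineThrough {A B : Fin 2 → ℝ} (h : A ≠ B) : IsLine (lineThrough A B) := by
  refine le_antisymm (totalDegree_lineThrough_le A B) (Nat.one_le_iff_ne_zero.mpr fun h0 => ?_)
  obtain ⟨D, hD⟩ := exists_det3_ne_zero h
  have hconst := totalDegree_eq_zero_iff_eq_C.mp h0
  have hA := congrArg (evalPt A) hconst
  have hD' := congrArg (evalPt D) hconst
  rw [evalPt_lineThrough] at hA hD'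
  simp only [evalPt, eval_C] at hA hD'
  exact hD (hD'.trans (hA.symm.trans (det3_self_outer A B)))

lemma exists_line_through_avoiding {A B : Fin 2 → ℝ} (h : B ≠ A) :
    ∃ L : Poly2, L.totalDegree ≤ 1 ∧ evalPt B L = 0 ∧ evalPt A L ≠ 0 := by
  obtain ⟨D, hD⟩ := exists_det3_ne_zero h
  refine ⟨lineThrough B D, totalDegree_lineThrough_le B D, ?_, ?_⟩
  · rw [evalPt_lineThrough, det3_self_outer]
  · rwa [evalPt_lineThrough, det3_swap, neg_ne_zero]

lemma nodesOn_subset (X : Finset (Fin 2 → ℝ)) (ℓ : Poly2) : nodesOn X ℓ ⊆ X :=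
  filter_subset _ _

def lineClass (S : Finset (Fin 2 → ℝ)) (A B : Fin 2 → ℝ) : Finset (Fin 2 → ℝ) :=
  S.filter fun C => det3 A B C = 0

lemma mem_lineClass_self {S : Finset (Fin 2 → ℝ)} (A : Fin 2 → ℝ) {B : Fin 2 → ℝ} (hB : B ∈ S) :
    B ∈ lineClass S A B :=
  mem_filter.mpr ⟨hB, det3_self_right A B⟩

lemma lineClass_eq_of_det3_eq_zero {S : Finset (Fin 2 → ℝ)} {A B D : Fin 2 → ℝ} (hB : B ≠ A)
    (hD : D ≠ A) (h : det3 A B D = 0) : lineClass S A D = lineClass S A B := by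
  have h' : det3 A D B = 0 := by rw [det3_swap, h, neg_zero]
  ext C
  simp only [lineClass, mem_filter, and_congr_right_iff]
  exact fun _ => ⟨det3_eq_zero_trans hD h, det3_eq_zero_trans hB h'⟩

lemma disjoint_lineClass {S : Finset (Fin 2 → ℝ)} {A B B' : Fin 2 → ℝ} (hA : A ∉ S)
    (h : det3 A B B' ≠ 0) : Disjoint (lineClass S A B) (lineClass S A B') := by
  refine disjoint_left.mpr fun C hC hC' => h ?_
  obtain ⟨hCS, hBC⟩ := mem_filter.mp hC
  have hB'C : det3 A C B' = 0 := by rw [det3_swap, (mem_filter.mp hC').2, neg_zero]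
  exact det3_eq_zero_trans (ne_of_mem_of_not_mem hCS hA) hBC hB'C

lemma card_lineClass_sdiff_lt {S : Finset (Fin 2 → ℝ)} {A B D : Fin 2 → ℝ} {L : Poly2}
    (hA : A ∉ S) (hB : B ∈ S) (hBL : evalPt B L = 0) (hD : D ∈ S \ nodesOn S L)
    (hBD : det3 A B D = 0) : #(lineClass (S \ nodesOn S L) A D) < #(lineClass S A B) := by
  have hDS := (mem_sdiff.mp hD).1
  rw [lineClass_eq_of_det3_eq_zero (ne_of_mem_of_not_mem hB hA) (ne_of_mem_of_not_mem hDS hA) hBD]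
  refine card_lt_card ((ssubset_iff_of_subset (filter_subset_filter _ sdiff_subset)).mpr
    ⟨B, mem_lineClass_self A hB, fun hB' => ?_⟩)
  exact (mem_sdiff.mp (mem_filter.mp hB').1).2 (mem_filter.mpr ⟨hB, hBL⟩)

lemma card_lineClass_add_card_lineClass_lt {S : Finset (Fin 2 → ℝ)} {A B B' D : Fin 2 → ℝ}
    (hA : A ∉ S) (hBB' : det3 A B B' ≠ 0) (hD : D ∈ S) (hBD : det3 A B D ≠ 0)
    (hB'D : det3 A B' D ≠ 0) : #(lineClass S A B) + #(lineClass S A B') < #S := by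
  rw [← card_union_of_disjoint (disjoint_lineClass hA hBB')]
  refine card_lt_card ((ssubset_iff_of_subset (union_subset (filter_subset _ _)
    (filter_subset _ _))).mpr ⟨D, hD, fun hD' => ?_⟩)
  rcases mem_union.mp hD' with h | h
  · exact hBD (mem_filter.mp h).2
  · exact hB'D (mem_filter.mp h).2

/-- Take `B` with the largest line class and `B'` with the largest class off the line `AB`:
removing the line `BB'` works, unless all of `S` lies on `AB`, in which case a line through `B`
alone does. -/
lemma exists_line_shrinking_lineClass {S : Finset (Fin 2 → ℝ)} {A : Fin 2 → ℝ} {k : ℕ}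
    (hA : A ∉ S) (hne : S.Nonempty) (hS : #S ≤ 2 * k + 2)
    (hcls : ∀ B ∈ S, #(lineClass S A B) ≤ k + 1) :
    ∃ L : Poly2, L.totalDegree ≤ 1 ∧ evalPt A L ≠ 0 ∧ #(S \ nodesOn S L) ≤ 2 * k ∧
      ∀ D ∈ S \ nodesOn S L, #(lineClass (S \ nodesOn S L) A D) ≤ k := by
  obtain ⟨B, hB, hBmax⟩ := exists_max_image S (fun B => #(lineClass S A B)) hne
  have hBA : B ≠ A := ne_of_mem_of_not_mem hB hA
  by_cases hall : ∀ C ∈ S, det3 A B C = 0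
  · have hSB : #S ≤ k + 1 := by
      simpa [lineClass, filter_true_of_mem hall] using hcls B hB
    obtain ⟨L, hLdeg, hLB, hLA⟩ := exists_line_through_avoiding hBA
    have hsub : S \ nodesOn S L ⊆ S.erase B := fun C hC =>
      mem_erase.mpr ⟨fun h => (mem_sdiff.mp hC).2 (mem_filter.mpr ⟨h ▸ hB, h ▸ hLB⟩),
        (mem_sdiff.mp hC).1⟩
    have hcard := (card_le_card hsub).trans_eq (card_erase_of_mem hB)
    exact ⟨L, hLdeg, hLA, by omega, fun C _ => (card_le_card (filter_subset _ _)).trans (by omega)⟩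
  push Not at hall
  obtain ⟨B', hB'mem, hB'max⟩ := exists_max_image (S.filter fun C => det3 A B C ≠ 0)
    (fun B => #(lineClass S A B)) (hall.imp fun C hC => mem_filter.mpr hC)
  obtain ⟨hB', hBB'⟩ := mem_filter.mp hB'mem
  have hLB : evalPt B (lineThrough B B') = 0 := by rw [evalPt_lineThrough, det3_self_outer]
  have hLB' : evalPt B' (lineThrough B B') = 0 := by rw [evalPt_lineThrough, det3_self_right]
  refine ⟨lineThrough B B', totalDegree_lineThrough_le B B', ?_, ?_, fun D hD => ?_⟩
  · rwa [evalPt_lineThrough, det3_rotate]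
  · have hpair : {B, B'} ⊆ nodesOn S (lineThrough B B') := by
      simp [insert_subset_iff, nodesOn, hB, hB', hLB, hLB']
    have hBB'ne : B ≠ B' := fun h => hBB' (h ▸ det3_self_right A B)
    have := card_le_card hpair
    rw [card_pair hBB'ne] at this
    rw [card_sdiff_of_subset (nodesOn_subset S _)]
    omega
  · by_cases hBD : det3 A B D = 0
    · exact Nat.le_of_lt_succ ((card_lineClass_sdiff_lt hA hB hLB hD hBD).trans_le (hcls B hB))
    by_cases hB'D : det3 A B' D = 0
    · exact Nat.le_of_lt_succ ((card_lineClass_sdiff_lt hA hB' hLB' hD hB'D).trans_le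
        (hcls B' hB'))
    -- `D` is on neither line class, and `#lineClass S A D ≤ #lineClass S A B' ≤ #lineClass S A B`
    have hDS := (mem_sdiff.mp hD).1
    have hsum := card_lineClass_add_card_lineClass_lt hA hBB' hDS hBD hB'D
    have hB'B := hBmax B' hB'
    have hDB' := hB'max D (mem_filter.mpr ⟨hDS, hBD⟩)
    have hmono : #(lineClass (S \ nodesOn S (lineThrough B B')) A D) ≤ #(lineClass S A D) :=
      card_le_card (filter_subset_filter _ sdiff_subset)
    omega

lemma isFund_smul_of_evalPt_ne_zero {n : ℕ} {Y : Finset (Fin 2 → ℝ)} {A : Fin 2 → ℝ} {q : Poly2}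
    (hdeg : q.totalDegree ≤ n) (hA : evalPt A q ≠ 0) (hvan : ∀ B ∈ Y, B ≠ A → evalPt B q = 0) :
    IsFund n Y A ((evalPt A q)⁻¹ • q) := by
  refine ⟨(totalDegree_smul_le _ _).trans hdeg, ?_, fun B hB hBA => ?_⟩
  · rw [evalPt, smul_eval]; exact inv_mul_cancel₀ hA
  · rw [evalPt, smul_eval, ← evalPt, hvan B hB hBA, mul_zero]

lemma isFund_one_singleton (n : ℕ) (A : Fin 2 → ℝ) : IsFund n {A} A 1 :=
  ⟨by simp, by simp [evalPt], fun B hB hBA => absurd (mem_singleton.mp hB) hBA⟩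

/-- `S` is covered by `k` lines avoiding `A`; their product, rescaled, is the fundamental
polynomial. -/
theorem exists_isFund_of_card_lineClass_le {A : Fin 2 → ℝ} :
    ∀ (k : ℕ) {S : Finset (Fin 2 → ℝ)}, A ∉ S → #S ≤ 2 * k →
      (∀ B ∈ S, #(lineClass S A B) ≤ k) → ∃ q, IsFund k (insert A S) A q
  | k, S, hA, hS, hcls => by
    rcases S.eq_empty_or_nonempty with rfl | hne
    · exact ⟨1, isFund_one_singleton k A⟩
    cases k with
    | zero => simp_all
    | succ k =>
      obtain ⟨L, hLdeg, hLA, hS', hcls'⟩ := exists_line_shrinking_lineClass hA hne hS hcls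
      obtain ⟨q, hqdeg, hqA, hqvan⟩ := exists_isFund_of_card_lineClass_le k
        (fun h => hA (mem_sdiff.mp h).1) hS' hcls'
      have hLqA : evalPt A (L * q) ≠ 0 := by
        rwa [evalPt_mul, hqA, mul_one]
      refine ⟨_, isFund_smul_of_evalPt_ne_zero ?_ hLqA fun B hB hBA => ?_⟩
      · exact (totalDegree_mul _ _).trans (by omega)
      · have hBS := (mem_insert.mp hB).resolve_left hBA
        rw [evalPt_mul]
        by_cases hBL : B ∈ nodesOn S L
        · rw [(mem_filter.mp hBL).2, zero_mul]
        · rw [hqvan B (mem_insert_of_mem (mem_sdiff.mpr ⟨hBS, hBL⟩)) hBA, mul_zero]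

/-- The witness is `p_A / ℓ`, rescaled. -/
lemma Uses.isFund_sdiff_nodesOn {n : ℕ} {X : Finset (Fin 2 → ℝ)} {A : Fin 2 → ℝ} {ℓ : Poly2}
    (hℓ : IsLine ℓ) (hA : A ∈ X) (h : Uses (n + 1) X A ℓ) :
    A ∈ X \ nodesOn X ℓ ∧ ∃ q, IsFund n (X \ nodesOn X ℓ) A q := by
  obtain ⟨_, ⟨hdeg, hA1, hvan⟩, q, rfl⟩ := h
  rw [evalPt_mul] at hA1
  have hℓ0 : ℓ ≠ 0 := by rintro rfl; simp [IsLine] at hℓ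
  have hq0 : q ≠ 0 := by rintro rfl; simp [evalPt] at hA1
  have hqdeg : q.totalDegree ≤ n := by
    rw [totalDegree_mul_of_isDomain hℓ0 hq0, hℓ] at hdeg; omega
  refine ⟨mem_sdiff.mpr ⟨hA, fun hA' => ?_⟩, _, isFund_smul_of_evalPt_ne_zero hqdeg
    (right_ne_zero_of_mul_eq_one hA1) fun B hB hBA => ?_⟩
  · rw [(mem_filter.mp hA').2, zero_mul] at hA1; exact zero_ne_one hA1
  · obtain ⟨hBX, hBℓ⟩ := mem_sdiff.mp hB
    have := hvan B hBX hBA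
    rw [evalPt_mul] at this
    exact (mul_eq_zero.mp this).resolve_left fun h => hBℓ (mem_filter.mpr ⟨hBX, h⟩)

open Module in
lemma exists_annihilator (Y : Finset (Fin 2 → ℝ)) (n : ℕ)
    (h : finrank ℝ (restrictTotalDegree (Fin 2) ℝ n) < #Y) :
    ∃ g : (Fin 2 → ℝ) → ℝ, (∃ B ∈ Y, g B ≠ 0) ∧
      ∀ q : Poly2, q.totalDegree ≤ n → ∑ B ∈ Y, g B * evalPt B q = 0 := by
  let V := restrictTotalDegree (Fin 2) ℝ n
  let φ : (Y → ℝ) →ₗ[ℝ] Dual ℝ V :=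
    ∑ b : Y, (LinearMap.proj b).smulRight ((aeval (b : Fin 2 → ℝ)).toLinearMap.comp V.subtype)
  have hφ : ∀ g q, φ g q = ∑ b : Y, g b * evalPt b q := by
    intro g q
    simp [φ, evalPt]
  obtain ⟨g, hg, hg0⟩ := Submodule.exists_mem_ne_zero_of_ne_bot (φ.ker_ne_bot_of_finrank_lt (by
    rwa [Subspace.dual_finrank_eq, finrank_fintype_fun_eq_card, Fintype.card_coe]))
  obtain ⟨b, hb⟩ := Function.ne_iff.mp hg0
  refine ⟨fun B => if hB : B ∈ Y then g ⟨B, hB⟩ else 0, ⟨b, b.2, by simpa using hb⟩,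
    fun q hq => ?_⟩
  rw [← sum_coe_sort Y]
  simpa [hφ] using LinearMap.congr_fun hg ⟨q, (mem_restrictTotalDegree _ _ _).mpr hq⟩

lemma finrank_restrictTotalDegree_three :
    Module.finrank ℝ (restrictTotalDegree (Fin 2) ℝ 3) = 10 := by
  have hdeg : {n : Fin 2 →₀ ℕ | (n.sum fun _ e => e) ≤ 3} =
      ↑((range 4).biUnion (univ : Finset (Fin 2)).finsuppAntidiag) := by
    ext n
    simp [mem_finsuppAntidiag, Nat.lt_succ_iff, Finsupp.sum_fintype]
  unfold restrictTotalDegree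
  rw [Module.finrank_eq_nat_card_basis (basisRestrictSupport ℝ _), Nat.card_coe_set_eq, hdeg,
    Set.ncard_coe_finset, card_biUnion]
  · simp [sum_range_succ, card_finsuppAntidiag_nat_eq_choose]
  · intro i _ j _ hij
    simp only [Function.onFun, disjoint_left, mem_finsuppAntidiag]
    rintro n ⟨rfl, -⟩ ⟨rfl, -⟩
    exact hij rfl

lemma eq_zero_of_isFund {n : ℕ} {Y : Finset (Fin 2 → ℝ)} {g : (Fin 2 → ℝ) → ℝ}
    (hg : ∀ q : Poly2, q.totalDegree ≤ n → ∑ B ∈ Y, g B * evalPt B q = 0)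
    {A : Fin 2 → ℝ} (hA : A ∈ Y) {q : Poly2} (hq : IsFund n Y A q) : g A = 0 := by
  have := hg q hq.1
  rwa [sum_eq_single_of_mem A hA fun B hB hBA => by rw [hq.2.2 B hB hBA, mul_zero], hq.2.1,
    mul_one] at this

lemma card_lineClass_le_three {X S : Finset (Fin 2 → ℝ)} (h5 : NoFiveCollinear X)
    {A B : Fin 2 → ℝ} (hA : A ∈ X) (hSX : S ⊆ X) (hAS : A ∉ S) (hB : B ∈ S) :
    #(lineClass S A B) ≤ 3 := by
  have hsub : insert A (lineClass S A B) ⊆ nodesOn X (lineThrough A B) := by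
    refine insert_subset (mem_filter.mpr ⟨hA, ?_⟩) fun C hC => ?_
    · rw [evalPt_lineThrough, det3_self_outer]
    · obtain ⟨hCS, hC0⟩ := mem_filter.mp hC
      exact mem_filter.mpr ⟨hSX hCS, by rw [evalPt_lineThrough, hC0]⟩
  have := (card_le_card hsub).trans (h5 _ (isLine_lineThrough (ne_of_mem_of_not_mem hB hAS).symm))
  rw [card_insert_of_notMem (show A ∉ lineClass S A B from fun h => hAS (mem_filter.mp h).1)]
    at this
  omega

theorem stmt6_general (X : Finset (Fin 2 → ℝ)) (hcard : X.card = 15)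
    (h5 : NoFiveCollinear X)
    (ℓ : Poly2) (hℓ : IsLine ℓ) (hk : (nodesOn X ℓ).card = 4) :
    (X.filter (fun A => Uses 4 X A ℓ)).card ≤ 3 := by
  set Y := X \ nodesOn X ℓ
  have hY : #Y = 11 := by rw [card_sdiff_of_subset (nodesOn_subset X ℓ), hcard, hk]
  obtain ⟨g, ⟨b, hbY, hb⟩, hg⟩ :=
    exists_annihilator Y 3 (by rw [finrank_restrictTotalDegree_three, hY]; norm_num)
  set W := Y.filter (g · ≠ 0)
  have hgW : ∀ q : Poly2, q.totalDegree ≤ 3 → ∑ B ∈ W, g B * evalPt B q = 0 := fun q hq =>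
    (sum_filter_of_ne fun _ _ h => left_ne_zero_of_mul h).trans (hg q hq)
  have husers : X.filter (fun A => Uses 4 X A ℓ) ⊆ Y \ W := by
    intro A hA
    obtain ⟨hAX, hAℓ⟩ := mem_filter.mp hA
    obtain ⟨hAY, q, hq⟩ := hAℓ.isFund_sdiff_nodesOn hℓ hAX
    exact mem_sdiff.mpr ⟨hAY, fun hAW => (mem_filter.mp hAW).2 (eq_zero_of_isFund hg hAY hq)⟩
  have hW : 8 ≤ #W := by
    by_contra! hW
    have hbW : b ∈ W := mem_filter.mpr ⟨hbY, hb⟩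
    have hWX : W ⊆ X := (filter_subset _ _).trans sdiff_subset
    obtain ⟨q, hq⟩ := exists_isFund_of_card_lineClass_le 3 (notMem_erase b W)
      (by rw [card_erase_of_mem hbW]; omega) fun B hB =>
        card_lineClass_le_three h5 (hWX hbW) ((erase_subset b W).trans hWX) (notMem_erase b W) hB
    rw [insert_erase hbW] at hq
    exact hb (eq_zero_of_isFund hgW hbW hq)
  have := card_le_card husers
  rw [card_sdiff_of_subset (show W ⊆ Y from filter_subset _ _), hY] at this
  omega

/-- In a `GC₄`-set of 15 nodes with no 5 collinear nodes, a 4-node line is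
used by at most three nodes. -/
theorem stmt6 (X : Finset (Fin 2 → ℝ)) (hGC : GCSet 4 X) (hcard : X.card = 15)
    (h5 : NoFiveCollinear X)
    (ℓ : Poly2) (hℓ : IsLine ℓ) (hk : (nodesOn X ℓ).card = 4) :
    (X.filter (fun A => Uses 4 X A ℓ)).card ≤ 3 :=
  stmt6_general X hcard h5 ℓ hℓ hk
end
end

section
/- Let X be a GC₄-set of 15 nodes with no 5 collinear nodes, let ℓ be a 4-node line, and let A ∈ X \ ℓ. Then every node of X \ (ℓ ∪ {A}) uses one of the five lines consisting of ℓ and the four lines joining A to the four nodes of X on ℓ. -/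
open MvPolynomial

noncomputable section
open scoped Classical

lemma deg_le_one_support (p : Poly2) (hp : p.totalDegree ≤ 1) {d : Fin 2 →₀ ℕ}
    (hd : d ∈ p.support) :
    d = 0 ∨ d = Finsupp.single 0 1 ∨ d = Finsupp.single 1 1 := by
  have h := (MvPolynomial.le_totalDegree hd).trans hp
  rw [Finsupp.sum_fintype _ _ (fun _ => rfl), Fin.sum_univ_two] at h
  have h0 : d 0 ≤ 1 := le_trans (Nat.le_add_right _ _) h
  have h1 : d 1 ≤ 1 := le_trans (Nat.le_add_left _ _) h
  interval_cases e0 : d 0 <;> interval_cases e1 : d 1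
  · left; ext i; fin_cases i <;> simp_all
  · right; right; ext i; fin_cases i <;> simp_all
  · right; left; ext i; fin_cases i <;> simp_all
  · omega

lemma decomp (p : Poly2) (hp : p.totalDegree ≤ 1) :
    p = C (p.coeff 0) + C (p.coeff (Finsupp.single 0 1)) * X 0
      + C (p.coeff (Finsupp.single 1 1)) * X 1 := by
  ext d
  have e01 : (Finsupp.single (0 : Fin 2) 1) ≠ Finsupp.single 1 1 := by
    intro h; have := DFunLike.congr_fun h 0; simp at this
  have e0 : (Finsupp.single (0 : Fin 2) 1) ≠ 0 := by
    intro h; have := DFunLike.congr_fun h 0; simp at this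
  have e1 : (Finsupp.single (1 : Fin 2) 1) ≠ 0 := by
    intro h; have := DFunLike.congr_fun h 1; simp at this
  by_cases hd : d ∈ p.support
  · rcases deg_le_one_support p hp hd with h | h | h <;> subst h <;>
      simp [coeff_C, coeff_C_mul, coeff_X', e01, e0, e1, e0.symm, e1.symm, e01.symm]
  · rw [MvPolynomial.notMem_support_iff] at hd
    rw [hd]
    by_cases h0 : d = 0
    · subst h0; simp_all
    by_cases hs0 : d = Finsupp.single 0 1
    · subst hs0; simp_all [coeff_X']
    by_cases hs1 : d = Finsupp.single 1 1
    · subst hs1; simp_all [coeff_X']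
    have n0 : (0 : Fin 2 →₀ ℕ) ≠ d := fun h => h0 h.symm
    have n1 : (Finsupp.single (0:Fin 2) 1) ≠ d := fun h => hs0 h.symm
    have n2 : (Finsupp.single (1:Fin 2) 1) ≠ d := fun h => hs1 h.symm
    simp [coeff_C, coeff_C_mul, coeff_X', n0, n1, n2]

lemma eval_linear (p : Poly2) (hp : p.totalDegree ≤ 1) (x : Fin 2 → ℝ) :
    evalPt x p = p.coeff 0 + p.coeff (Finsupp.single 0 1) * x 0
      + p.coeff (Finsupp.single 1 1) * x 1 := by
  conv_lhs => rw [evalPt, decomp p hp]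
  simp

lemma two_point_dvd (ℓ m : Poly2) (hl : ℓ.totalDegree = 1) (hm : m.totalDegree ≤ 1)
    (P Q : Fin 2 → ℝ) (hPQ : P ≠ Q)
    (hlP : evalPt P ℓ = 0) (hlQ : evalPt Q ℓ = 0)
    (hmP : evalPt P m = 0) (hmQ : evalPt Q m = 0) : ℓ ∣ m := by
  set e := ℓ.coeff 0 with he
  set a := ℓ.coeff (Finsupp.single 0 1) with ha
  set b := ℓ.coeff (Finsupp.single 1 1) with hb
  set e' := m.coeff 0
  set a' := m.coeff (Finsupp.single 0 1)
  set b' := m.coeff (Finsupp.single 1 1)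
  have hl1 : ℓ.totalDegree ≤ 1 := hl.le
  rw [eval_linear ℓ hl1] at hlP hlQ
  rw [eval_linear m hm] at hmP hmQ
  -- (a, b) ≠ 0
  have hab : a ≠ 0 ∨ b ≠ 0 := by
    by_contra h
    push_neg at h
    have hdeg : ℓ = C e := by
      rw [decomp ℓ hl1, ← ha, ← hb, ← he, h.1, h.2]; simp
    rw [hdeg] at hl
    simp [totalDegree_C] at hl
  have hd : P 0 - Q 0 ≠ 0 ∨ P 1 - Q 1 ≠ 0 := by
    by_contra h
    push_neg at h
    apply hPQ
    funext i
    fin_cases i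
    · show P 0 = Q 0; linarith [h.1]
    · show P 1 = Q 1; linarith [h.2]
  have key : a * b' - a' * b = 0 := by
    have h1 : a * (P 0 - Q 0) + b * (P 1 - Q 1) = 0 := by linarith
    have h2 : a' * (P 0 - Q 0) + b' * (P 1 - Q 1) = 0 := by linarith
    rcases hd with hd | hd
    · have : (a * b' - a' * b) * (P 0 - Q 0) = 0 := by linear_combination b' * h1 - b * h2
      exact (mul_eq_zero.mp this).resolve_right hd
    · have : (a * b' - a' * b) * (P 1 - Q 1) = 0 := by linear_combination a * h2 - a' * h1
      exact (mul_eq_zero.mp this).resolve_right hd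
  have main : ∀ c : ℝ, a' = c * a → b' = c * b → e' = c * e → ℓ ∣ m := by
    intro c ha' hb' he'
    have hmeq : m = C c * ℓ := by
      rw [decomp m hm, decomp ℓ hl1, ← he, ← ha, ← hb]
      show C e' + C a' * X 0 + C b' * X 1 = _
      rw [ha', hb', he', map_mul, map_mul, map_mul]
      ring
    exact ⟨C c, by rw [hmeq, mul_comm]⟩
  rcases hab with ha0 | hb0
  · refine main (a'/a) (by field_simp) ?_ ?_
    · field_simp
      linear_combination key
    · have hae : a * e' = a' * e := by linear_combination a * hmP - a' * hlP - P 1 * key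
      field_simp
      linear_combination hae
  · refine main (b'/b) ?_ ?_ ?_
    · field_simp
      linear_combination -key
    · field_simp
    · have hbe : b * e' = b' * e := by linear_combination b * hmP - b' * hlP + P 0 * key
      field_simp
      linear_combination hbe

/-- Every node of `X \ (ℓ ∪ {A})` uses either the 4-node line `ℓ` or one of
the four lines joining `A` to the four nodes of `X` on `ℓ`. -/
theorem stmt9 (X : Finset (Fin 2 → ℝ)) (hGC : GCSet 4 X) (hcard : X.card = 15)
    (h5 : NoFiveCollinear X)
    (ℓ : Poly2) (hℓ : IsLine ℓ) (hk : (nodesOn X ℓ).card = 4)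
    (A : Fin 2 → ℝ) (hA : A ∈ X) (hAoff : evalPt A ℓ ≠ 0)
    (N : Fin 2 → ℝ) (hN : N ∈ X) (hNA : N ≠ A) (hNoff : evalPt N ℓ ≠ 0) :
    Uses 4 X N ℓ ∨
      ∃ ℓ' : Poly2, IsLine ℓ' ∧ Uses 4 X N ℓ' ∧ evalPt A ℓ' = 0 ∧
        ∃ P ∈ nodesOn X ℓ, evalPt P ℓ' = 0 := by
  obtain ⟨-, hfund⟩ := hGC
  obtain ⟨f, hf, hF⟩ := hfund N hN
  have hvan : ∀ B ∈ X, B ≠ N → ∃ i, evalPt B (f i) = 0 := by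
    intro B hB hBN
    have h0 := hF.2.2 B hB hBN
    simp only [evalPt, map_prod] at h0
    obtain ⟨i, -, hi⟩ := Finset.prod_eq_zero_iff.mp h0
    exact ⟨i, hi⟩
  obtain ⟨j, hj⟩ := hvan A hA (Ne.symm hNA)
  by_cases hcase : ∃ P ∈ nodesOn X ℓ, evalPt P (f j) = 0
  · right
    exact ⟨f j, hf j, ⟨∏ i, f i, hF, Finset.dvd_prod_of_mem f (Finset.mem_univ j)⟩, hj, hcase⟩
  · left
    push_neg at hcase
    have hmap : ∀ P ∈ nodesOn X ℓ, ∃ i, i ≠ j ∧ evalPt P (f i) = 0 := by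
      intro P hP
      have hPX : P ∈ X := (Finset.mem_filter.mp hP).1
      have hPl : evalPt P ℓ = 0 := (Finset.mem_filter.mp hP).2
      have hPN : P ≠ N := fun h => hNoff (h ▸ hPl)
      obtain ⟨i, hi⟩ := hvan P hPX hPN
      exact ⟨i, fun h => hcase P hP (h ▸ hi), hi⟩
    classical
    set g : (Fin 2 → ℝ) → Fin 4 :=
      fun P => if h : ∃ i, i ≠ j ∧ evalPt P (f i) = 0 then h.choose else j with hg
    have hgmem : ∀ P ∈ nodesOn X ℓ, g P ∈ Finset.univ.erase j ∧ evalPt P (f (g P)) = 0 := by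
      intro P hP
      have hex : ∃ i, i ≠ j ∧ evalPt P (f i) = 0 := hmap P hP
      have hgP : g P = hex.choose := by simp only [hg, dif_pos hex]
      rw [hgP]
      exact ⟨Finset.mem_erase.mpr ⟨hex.choose_spec.1, Finset.mem_univ _⟩, hex.choose_spec.2⟩
    have hlt : (Finset.univ.erase j).card < (nodesOn X ℓ).card := by
      rw [hk, Finset.card_erase_of_mem (Finset.mem_univ j)]
      simp
    obtain ⟨P, hP, Q, hQ, hPQ, hgPQ⟩ :=
      Finset.exists_ne_map_eq_of_card_lt_of_maps_to hlt (fun P hP => (hgmem P hP).1)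
    have hQg : evalPt Q (f (g P)) = 0 := by rw [hgPQ]; exact (hgmem Q hQ).2
    have hdvd : ℓ ∣ f (g P) :=
      two_point_dvd ℓ (f (g P)) hℓ (hf (g P)).le P Q hPQ
        (Finset.mem_filter.mp hP).2 (Finset.mem_filter.mp hQ).2 (hgmem P hP).2 hQg
    exact ⟨∏ i, f i, hF, hdvd.trans (Finset.dvd_prod_of_mem f (Finset.mem_univ _))⟩
end
end
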